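/- Let Y_1 ⊋ Y_2 ⊋ ⋯ ⊋ Y_t (t ≥ 2) be a strictly descending chain of finite sets of distinct points in P^n over a field of characteristic zero, and let ν_1,…,ν_t ≥ 1. Then for all sufficiently large i, (I_{Y_1}^{ν_1} I_{Y_2}^{ν_2} ⋯ I_{Y_t}^{ν_t})_i ⊆ (∂(I_{Y_1}^{ν_1+1} I_{Y_2}^{ν_2} ⋯ I_{Y_t}^{ν_t}))_i. -/

import Mathlib

/-!
Write `J = ∏ I_{Y_k}^{ν_k}` and `J' = I_{Y_1} J`. By Euler's identity every homogeneous element of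
`J'` of positive degree lies in `∂J'`. Fix a point `q ∈ Y_1`, let `m ≥ ν_1` be the sum of the `ν_k`
with `q ∈ Y_k`, and let `C` be a power of a form that vanishes at all other points but not at `q`,
chosen so that `ℓ^(m+1) C ∈ J'` for every linear form `ℓ` through `q`. Then
`C ∂_j(ℓ^(m+1) C) - ∂_j C · ℓ^(m+1) C = (m+1) (∂_j ℓ) ℓ^m C²`, so `ℓ^m C² ∈ ∂J'`; by polarization
the same holds for every product of `m` linear forms through `q`, and since `J ⊆ I_q^m` this gives
`C² J ⊆ ∂J'`. In large degrees every form is congruent modulo `I_{Y_1}` to a combination of these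
`C²` (Lagrange interpolation on `Y_1`), so `g h ∈ ∂J'` for every form `g ∈ J` and every form `h` of
large degree; as `J` is generated by finitely many forms, `J_i ⊆ ∂J'` for large `i`.
-/

open MvPolynomial

/-- The homogeneous vanishing ideal of the `K`-rational point of `ℙ^n` with homogeneous
coordinates `v`. -/
noncomputable def pointIdeal {K : Type*} [Field K] {n : ℕ} (v : Fin (n + 1) → K) :
    Ideal (MvPolynomial (Fin (n + 1)) K) :=
  Ideal.span {F | (∃ d, F.IsHomogeneous d) ∧ MvPolynomial.eval v F = 0}

/-- The ideal `∂I` generated by all partial derivatives of elements of `I`. -/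
noncomputable def partialsIdeal {K : Type*} [Field K] {n : ℕ}
    (I : Ideal (MvPolynomial (Fin (n + 1)) K)) : Ideal (MvPolynomial (Fin (n + 1)) K) :=
  Ideal.span {g | ∃ F ∈ I, ∃ j : Fin (n + 1), g = pderiv j F}

open Finset
open scoped Nat

attribute [local instance] MvPolynomial.gradedAlgebra

section Polarization

variable {R : Type*} [CommRing R]

theorem sum_neg_one_pow_card_of_disjoint {α : Type*} [Fintype α] [DecidableEq α] (A : Finset α) :
    ∑ T : Finset α with Disjoint T A, (-1 : R) ^ #T = if A = univ then 1 else 0 := by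
  have hfilter : ({T : Finset α | Disjoint T A} : Finset _) = Aᶜ.powerset := by
    ext T; simp [subset_compl_iff_disjoint_right]
  have hsum := congrArg (Int.cast : ℤ → R) (sum_powerset_neg_one_pow_card (x := Aᶜ))
  push_cast [compl_eq_empty_iff] at hsum
  rw [hfilter, hsum]

theorem sum_prod_comp_of_surjective (m : ℕ) (y : Fin m → R) :
    ∑ p : Fin m → Fin m with Function.Surjective p, ∏ i, y (p i) = m ! * ∏ i, y i := by
  rw [sum_subtype _ (p := Function.Surjective)
    fun _ => by simp only [mem_filter, mem_univ, true_and]]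
  have hbij : Function.Bijective fun e : Equiv.Perm (Fin m) =>
      (⟨e, e.surjective⟩ : {p : Fin m → Fin m // Function.Surjective p}) := by
    refine ⟨fun e e' h => Equiv.ext (congrFun (congrArg Subtype.val h)), fun p => ?_⟩
    exact ⟨Equiv.ofBijective p ⟨Finite.injective_iff_surjective.mpr p.2, p.2⟩, rfl⟩
  rw [← Fintype.sum_bijective _ hbij (fun e => ∏ i, y (e i)) _ fun _ => rfl]
  simp [Equiv.prod_comp, Fintype.card_perm]

theorem factorial_mul_prod_eq_sum_neg_one_pow_mul_sum_pow (m : ℕ) (y : Fin m → R) :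
    (m ! : R) * ∏ i, y i = ∑ T : Finset (Fin m), (-1) ^ #T * (∑ i ∈ Tᶜ, y i) ^ m := by
  have expand (T : Finset (Fin m)) : (-1) ^ #T * (∑ i ∈ Tᶜ, y i) ^ m =
      ∑ p : Fin m → Fin m, if Disjoint T (univ.image p) then (-1) ^ #T * ∏ i, y (p i) else 0 := by
    rw [sum_pow', mul_sum, ← Fintype.sum_extend_by_zero]
    refine sum_congr rfl fun p _ => ?_
    simp [Fintype.mem_piFinset, disjoint_right]
  have image_eq_univ (p : Fin m → Fin m) : univ.image p = univ ↔ Function.Surjective p := by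
    simp [eq_univ_iff_forall, Function.Surjective]
  simp_rw [expand]
  rw [sum_comm]
  simp_rw [← sum_filter, ← sum_mul, sum_neg_one_pow_card_of_disjoint, image_eq_univ, ite_mul,
    one_mul, zero_mul]
  rw [← sum_filter, sum_prod_comp_of_surjective]

theorem span_pow_le_of_forall_pow_mem {W : Ideal R} {S : AddSubmonoid R} {m : ℕ}
    (hm : IsUnit (m ! : R)) (h : ∀ ℓ ∈ S, ℓ ^ m ∈ W) : Ideal.span (S : Set R) ^ m ≤ W := by
  rw [Ideal.span, Submodule.span_pow, Submodule.span_le]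
  intro x hx
  obtain ⟨y, rfl⟩ := Set.mem_pow.mp hx
  rw [List.prod_ofFn, SetLike.mem_coe, ← Ideal.unit_mul_mem_iff_mem W hm,
    factorial_mul_prod_eq_sum_neg_one_pow_mul_sum_pow]
  exact sum_mem fun T _ => Ideal.mul_mem_left _ _ (h _ (sum_mem fun i _ => (y i).2))

end Polarization

theorem Ideal.IsHomogeneous.pow {ι A σ : Type*} [CommSemiring A] [DecidableEq ι] [AddMonoid ι]
    [SetLike σ A] [AddSubmonoidClass σ A] {𝒜 : ι → σ} [GradedRing 𝒜] {I : Ideal A}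
    (hI : I.IsHomogeneous 𝒜) (m : ℕ) : (I ^ m).IsHomogeneous 𝒜 := by
  induction m with
  | zero => rw [pow_zero, Ideal.one_eq_top]; exact Ideal.IsHomogeneous.top 𝒜
  | succ m ih => rw [pow_succ]; exact ih.mul hI

section Homogeneous

variable {σ R : Type*} [CommSemiring R]

theorem MvPolynomial.IsHomogeneous.aeval_algebraMap_mul {S : Type*} [CommSemiring S] [Algebra R S]
    {F : MvPolynomial σ R} {d : ℕ} (hF : F.IsHomogeneous d) (x : σ → R) (t : S) :
    MvPolynomial.aeval (fun j => algebraMap R S (x j) * t) F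
      = algebraMap R S (eval x F) * t ^ d := by
  conv_lhs => rw [F.as_sum]
  conv_rhs => rw [F.as_sum]
  rw [map_sum, map_sum, map_sum, sum_mul]
  refine sum_congr rfl fun u hu => ?_
  have hdeg : u.degree = d := by
    by_contra h; exact mem_support_iff.mp hu (hF.coeff_eq_zero h)
  simp only [aeval_monomial, eval_monomial, mul_pow, Finsupp.prod_mul, ← hdeg, map_mul,
    map_finsuppProd, map_pow]
  simp [Finsupp.prod, prod_pow_eq_pow_sum, mul_assoc, Finsupp.degree_apply]

theorem MvPolynomial.IsHomogeneous.exists_pderiv_eq_C [Fintype σ] {ℓ : MvPolynomial σ R}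
    (hℓ : ℓ.IsHomogeneous 1) (h0 : ℓ ≠ 0) : ∃ j a, a ≠ 0 ∧ pderiv j ℓ = C a := by
  have heuler : ∑ j, X j * pderiv j ℓ = ℓ := by rw [hℓ.sum_X_mul_pderiv, one_smul]
  obtain ⟨j, -, hj⟩ := exists_ne_zero_of_sum_ne_zero (heuler.trans_ne h0)
  have hconst :=
    totalDegree_eq_zero_iff_eq_C.mp (Nat.le_zero.mp (hℓ.pderiv (i := j)).totalDegree_le)
  refine ⟨j, _, fun ha => hj ?_, hconst⟩
  rw [hconst, ha, C_0, mul_zero]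

theorem MvPolynomial.IsHomogeneous.homogeneousComponent_mul {g : MvPolynomial σ R} {d : ℕ}
    (hg : g.IsHomogeneous d) (f : MvPolynomial σ R) (i : ℕ) :
    homogeneousComponent i (g * f) = if d ≤ i then g * homogeneousComponent (i - d) f else 0 := by
  rw [← decomposition.decompose'_apply, ← decomposition.decompose'_apply]
  exact DirectSum.coe_decompose_mul_of_left_mem _ i ((mem_homogeneousSubmodule d g).mpr hg)

/-- A finitely generated homogeneous ideal is generated in bounded degree, so its homogeneous
elements of large degree are combinations of generators with coefficients of large degree. -/
theorem exists_forall_isHomogeneous_mem_of_mul_mem {I P : Ideal (MvPolynomial σ R)}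
    (hI : I.IsHomogeneous (homogeneousSubmodule σ R)) (hfg : I.FG) {N : ℕ}
    (h : ∀ g ∈ I, ∀ d, g.IsHomogeneous d → ∀ f e, f.IsHomogeneous e → N ≤ e → g * f ∈ P) :
    ∃ i₀, ∀ i ≥ i₀, ∀ F ∈ I, F.IsHomogeneous i → F ∈ P := by
  classical
  obtain ⟨G, rfl⟩ := hfg
  refine ⟨G.sup totalDegree + N, fun i hi F hFI hF => ?_⟩
  obtain ⟨A, -, rfl⟩ := Submodule.mem_span_finset.mp hFI
  rw [← homogeneousComponent_eq_self hF, map_sum]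
  refine sum_mem fun g hg => ?_
  rw [smul_eq_mul, mul_comm, ← sum_homogeneousComponent g, sum_mul, map_sum]
  refine sum_mem fun d hd => ?_
  rw [(homogeneousComponent_isHomogeneous d g).homogeneousComponent_mul]
  split_ifs with hdi
  · have hdG : d ≤ G.sup totalDegree := (Nat.lt_succ_iff.mp (mem_range.mp hd)).trans (le_sup hg)
    exact h _ (homogeneousComponent_mem_of_mem hI (Submodule.subset_span hg) d) d
      (homogeneousComponent_isHomogeneous _ _) _ _ (homogeneousComponent_isHomogeneous _ _)
      (by omega)
  · exact zero_mem _

end Homogeneous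

section LinearForms

variable {K σ : Type*} [Field K]

theorem isUnit_C_of_ne_zero {a : K} (ha : a ≠ 0) : IsUnit (C a : MvPolynomial σ K) :=
  ha.isUnit.map C

noncomputable def vanishingLinearForms (v : σ → K) : Submodule K (MvPolynomial σ K) :=
  homogeneousSubmodule σ K 1 ⊓ LinearMap.ker (aeval v).toLinearMap

theorem mem_vanishingLinearForms {v : σ → K} {ℓ : MvPolynomial σ K} :
    ℓ ∈ vanishingLinearForms v ↔ ℓ.IsHomogeneous 1 ∧ eval v ℓ = 0 := by
  simp [vanishingLinearForms, mem_homogeneousSubmodule]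

theorem exists_isHomogeneous_one_eval_eq_zero_eval_ne_zero {w w' : σ → K} (hw' : w' ≠ 0)
    (h : ∀ c : K, w ≠ c • w') :
    ∃ ℓ : MvPolynomial σ K, ℓ.IsHomogeneous 1 ∧ eval w' ℓ = 0 ∧ eval w ℓ ≠ 0 := by
  obtain ⟨j₁, hj₁⟩ : ∃ j, w' j ≠ 0 := by simpa [funext_iff] using hw'
  obtain ⟨j, hj⟩ : ∃ j, w' j₁ * w j - w' j * w j₁ ≠ 0 := by
    by_contra! hcon
    refine h (w j₁ / w' j₁) (funext fun j => ?_)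
    rw [Pi.smul_apply, smul_eq_mul, div_mul_eq_mul_div, eq_div_iff hj₁]
    linear_combination hcon j
  refine ⟨C (w' j₁) * X j - C (w' j) * X j₁, ?_, by simp [mul_comm], by simpa using hj⟩
  simpa using ((isHomogeneous_C _ (w' j₁)).mul (isHomogeneous_X K j)).sub
    ((isHomogeneous_C _ (w' j)).mul (isHomogeneous_X K j₁))

end LinearForms

section PointIdeal

variable {K : Type*} [Field K] {n : ℕ}

theorem mem_pointIdeal_of_eval_eq_zero {v : Fin (n + 1) → K} {F : MvPolynomial (Fin (n + 1)) K}
    {d : ℕ} (hF : F.IsHomogeneous d) (h : eval v F = 0) : F ∈ pointIdeal v :=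
  Ideal.subset_span ⟨⟨d, hF⟩, h⟩

theorem isHomogeneous_pointIdeal (v : Fin (n + 1) → K) :
    (pointIdeal v).IsHomogeneous (homogeneousSubmodule (Fin (n + 1)) K) :=
  Ideal.homogeneous_span _ _ fun _ ⟨⟨d, hd⟩, _⟩ => ⟨d, (mem_homogeneousSubmodule d _).mpr hd⟩

theorem pointIdeal_le_span_vanishingLinearForms {v : Fin (n + 1) → K} (hv : v ≠ 0) :
    pointIdeal v ≤ Ideal.span (vanishingLinearForms v) := by
  obtain ⟨j₀, hj₀⟩ : ∃ j, v j ≠ 0 := by simpa [funext_iff] using hv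
  set η : MvPolynomial (Fin (n + 1)) K := C (v j₀)⁻¹ * X j₀
  let π := Ideal.Quotient.mkₐ K
    (Ideal.span (vanishingLinearForms v : Set (MvPolynomial (Fin (n + 1)) K)))
  -- modulo the linear forms through `v`, the variables become `v j • η`
  have hX (j : Fin (n + 1)) : π (X j) = π (algebraMap K _ (v j) * η) := by
    refine Ideal.Quotient.eq.mpr (Ideal.subset_span (mem_vanishingLinearForms.mpr ⟨?_, ?_⟩))
    · simpa using (isHomogeneous_X K j).sub
        ((isHomogeneous_C _ (v j)).mul ((isHomogeneous_C _ (v j₀)⁻¹).mul (isHomogeneous_X K j₀)))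
    · simp [η, hj₀]
  rw [pointIdeal, Ideal.span_le]
  rintro F ⟨⟨d, hF⟩, hFv⟩
  rw [SetLike.mem_coe, ← Ideal.Quotient.eq_zero_iff_mem]
  calc Ideal.Quotient.mk _ F = π (aeval X F) := by rw [aeval_X_left_apply]; rfl
    _ = aeval (fun j => π (X j)) F := by rw [← comp_aeval]; rfl
    _ = π (aeval (fun j => algebraMap K _ (v j) * η) F) := by
      simp only [hX]; rw [← comp_aeval]; rfl
    _ = 0 := by rw [hF.aeval_algebraMap_mul, hFv, map_zero, zero_mul, map_zero]

end PointIdeal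

section Partials

variable {K : Type*} [Field K] {n : ℕ}

theorem pderiv_mem_partialsIdeal {I : Ideal (MvPolynomial (Fin (n + 1)) K)}
    {F : MvPolynomial (Fin (n + 1)) K} (hF : F ∈ I) (j : Fin (n + 1)) :
    pderiv j F ∈ partialsIdeal I :=
  Ideal.subset_span ⟨F, hF, j, rfl⟩

variable [CharZero K]

theorem mem_partialsIdeal_of_isHomogeneous {I : Ideal (MvPolynomial (Fin (n + 1)) K)}
    {F : MvPolynomial (Fin (n + 1)) K} {d : ℕ} (hFI : F ∈ I) (hF : F.IsHomogeneous d)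
    (hd : d ≠ 0) : F ∈ partialsIdeal I := by
  have hsum : C (d : K) * F ∈ partialsIdeal I := by
    rw [map_natCast, ← nsmul_eq_mul, ← hF.sum_X_mul_pderiv]
    exact sum_mem fun j _ => Ideal.mul_mem_left _ _ (pderiv_mem_partialsIdeal hFI j)
  exact (Ideal.unit_mul_mem_iff_mem _ (isUnit_C_of_ne_zero (Nat.cast_ne_zero.mpr hd))).mp hsum

theorem pow_mul_sq_mem_partialsIdeal {I : Ideal (MvPolynomial (Fin (n + 1)) K)}
    {ℓ G : MvPolynomial (Fin (n + 1)) K} {m d : ℕ} (hℓ : ℓ.IsHomogeneous 1)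
    (hG : G.IsHomogeneous d) (hm : m ≠ 0) (hu : ℓ ^ (m + 1) * G ∈ I) :
    ℓ ^ m * G ^ 2 ∈ partialsIdeal I := by
  rcases eq_or_ne ℓ 0 with rfl | hℓ0
  · rw [zero_pow hm, zero_mul]; exact zero_mem _
  obtain ⟨j, a, ha, hj⟩ := hℓ.exists_pderiv_eq_C hℓ0
  have hpartial : G * pderiv j (ℓ ^ (m + 1) * G) - pderiv j G * (ℓ ^ (m + 1) * G)
      ∈ partialsIdeal I :=
    sub_mem (Ideal.mul_mem_left _ _ (pderiv_mem_partialsIdeal hu j))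
      (Ideal.mul_mem_left _ _
        (mem_partialsIdeal_of_isHomogeneous hu ((hℓ.pow (m + 1)).mul hG) (by omega)))
  have hleibniz : G * pderiv j (ℓ ^ (m + 1) * G) - pderiv j G * (ℓ ^ (m + 1) * G)
      = C ((m + 1 : ℕ) * a) * (ℓ ^ m * G ^ 2) := by
    rw [Derivation.leibniz, Derivation.leibniz_pow, hj, map_mul, map_natCast]
    simp only [smul_eq_mul, Nat.add_sub_cancel]
    push_cast
    ring
  rw [hleibniz] at hpartial
  exact (Ideal.unit_mul_mem_iff_mem _ (isUnit_C_of_ne_zero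
    (mul_ne_zero (Nat.cast_ne_zero.mpr m.succ_ne_zero) ha))).mp hpartial

theorem mul_sq_mem_partialsIdeal_of_pow_mul_mem {I : Ideal (MvPolynomial (Fin (n + 1)) K)}
    {G : MvPolynomial (Fin (n + 1)) K} {d : ℕ} (hG : G.IsHomogeneous d) {w : Fin (n + 1) → K}
    (hw : w ≠ 0) {m : ℕ} (hm : m ≠ 0)
    (h : ∀ ℓ ∈ vanishingLinearForms w, ℓ ^ (m + 1) * G ∈ I) :
    ∀ x ∈ pointIdeal w ^ m, x * G ^ 2 ∈ partialsIdeal I := by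
  have hunit : IsUnit (m ! : MvPolynomial (Fin (n + 1)) K) := by
    rw [← map_natCast C]; exact isUnit_C_of_ne_zero (Nat.cast_ne_zero.mpr m.factorial_ne_zero)
  have hspan : Ideal.span (vanishingLinearForms w : Set _) ^ m
      ≤ (partialsIdeal I).colon {G ^ 2} :=
    span_pow_le_of_forall_pow_mem (S := (vanishingLinearForms w).toAddSubmonoid) hunit
      fun ℓ hℓ => Submodule.mem_colon_singleton.mpr
        (pow_mul_sq_mem_partialsIdeal (mem_vanishingLinearForms.mp hℓ).1 hG hm (h ℓ hℓ))
  exact fun x hx => Submodule.mem_colon_singleton.mp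
    (hspan (Ideal.pow_right_mono (pointIdeal_le_span_vanishingLinearForms hw) m hx))

end Partials

section PointsIdeal

variable {K : Type*} [Field K] {n : ℕ} {ι : Type*}

noncomputable def pointsIdeal (v : ι → Fin (n + 1) → K) (Z : Finset ι) :
    Ideal (MvPolynomial (Fin (n + 1)) K) :=
  ⨅ q ∈ Z, pointIdeal (v q)

variable {v : ι → Fin (n + 1) → K}

theorem isHomogeneous_pointsIdeal (Z : Finset ι) :
    (pointsIdeal v Z).IsHomogeneous (homogeneousSubmodule (Fin (n + 1)) K) :=
  Ideal.IsHomogeneous.iInf fun q => Ideal.IsHomogeneous.iInf fun _ => isHomogeneous_pointIdeal (v q)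

theorem mem_pointsIdeal {Z : Finset ι} {F : MvPolynomial (Fin (n + 1)) K} :
    F ∈ pointsIdeal v Z ↔ ∀ q ∈ Z, F ∈ pointIdeal (v q) := by
  simp [pointsIdeal]

theorem mul_mem_pointsIdeal (Z : Finset ι) {q : ι} {ℓ M : MvPolynomial (Fin (n + 1)) K}
    (hℓ : ℓ ∈ pointIdeal (v q)) (hM : ∀ q' ≠ q, M ∈ pointIdeal (v q')) :
    ℓ * M ∈ pointsIdeal v Z := by
  refine mem_pointsIdeal.mpr fun q' _ => ?_
  rcases eq_or_ne q' q with rfl | hq'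
  · exact Ideal.mul_mem_right _ _ hℓ
  · exact Ideal.mul_mem_left _ _ (hM q' hq')

theorem mem_pointsIdeal_of_notMem {Z : Finset ι} {q : ι} (hq : q ∉ Z)
    {M : MvPolynomial (Fin (n + 1)) K} (hM : ∀ q' ≠ q, M ∈ pointIdeal (v q')) :
    M ∈ pointsIdeal v Z :=
  mem_pointsIdeal.mpr fun q' hq' => hM q' (ne_of_mem_of_not_mem hq' hq)

theorem exists_form_eval_ne_zero_vanishing_at_others [Fintype ι] [DecidableEq ι]
    (hv0 : ∀ q, v q ≠ 0) (hdist : ∀ q q', q ≠ q' → ∀ c : K, v q ≠ c • v q') (q : ι) :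
    ∃ M : MvPolynomial (Fin (n + 1)) K, M.IsHomogeneous (Fintype.card ι - 1) ∧
      eval (v q) M ≠ 0 ∧ ∀ q' ≠ q, eval (v q') M = 0 := by
  choose! ℓ hℓ hℓq' hℓq using fun q' (h : q' ≠ q) =>
    exists_isHomogeneous_one_eval_eq_zero_eval_ne_zero (hv0 q') (hdist q q' h.symm)
  refine ⟨∏ q' ∈ univ.erase q, ℓ q', ?_, ?_, fun q' hq' => ?_⟩
  · simpa [card_erase_of_mem] using
      IsHomogeneous.prod (univ.erase q) ℓ _ fun q' hq' => hℓ q' (ne_of_mem_erase hq')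
  · rw [map_prod]
    exact prod_ne_zero_iff.mpr fun q' hq' => hℓq q' (ne_of_mem_erase hq')
  · rw [map_prod]
    exact prod_eq_zero (mem_erase.mpr ⟨hq', mem_univ q'⟩) (hℓq' q' hq')

theorem exists_sub_sum_mul_mem_pointsIdeal {Z : Finset ι} (hv : ∀ q ∈ Z, v q ≠ 0)
    {G : ι → MvPolynomial (Fin (n + 1)) K} {d : ℕ} (hG : ∀ q ∈ Z, (G q).IsHomogeneous d)
    (hGq : ∀ q ∈ Z, eval (v q) (G q) ≠ 0)
    (hGq' : ∀ q ∈ Z, ∀ q' ∈ Z, q' ≠ q → eval (v q') (G q) = 0)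
    {f : MvPolynomial (Fin (n + 1)) K} {e : ℕ} (hf : f.IsHomogeneous e) (he : d ≤ e) :
    ∃ s : ι → MvPolynomial (Fin (n + 1)) K, (f - ∑ q ∈ Z, G q * s q).IsHomogeneous e ∧
      f - ∑ q ∈ Z, G q * s q ∈ pointsIdeal v Z := by
  choose! j hj using fun q hq => (show ∃ j, v q j ≠ 0 by simpa [funext_iff] using hv q hq)
  set s : ι → MvPolynomial (Fin (n + 1)) K := fun q =>
    C (eval (v q) f / (eval (v q) (G q) * v q (j q) ^ (e - d))) * X (j q) ^ (e - d)
  have hhom : (f - ∑ q ∈ Z, G q * s q).IsHomogeneous e := by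
    refine hf.sub (IsHomogeneous.sum _ _ _ fun q hq => ?_)
    simpa [Nat.add_sub_cancel' he] using
      (hG q hq).mul ((isHomogeneous_C _ _).mul ((isHomogeneous_X K (j q)).pow (e - d)))
  refine ⟨s, hhom, mem_pointsIdeal.mpr fun q₀ hq₀ => mem_pointIdeal_of_eval_eq_zero hhom ?_⟩
  rw [map_sub, map_sum, sum_eq_single q₀
    (fun q hq hne => by rw [map_mul, hGq' q hq q₀ hq₀ hne.symm, zero_mul]) (absurd hq₀)]
  have hGq₀ := hGq q₀ hq₀
  have hj₀ := hj q₀ hq₀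
  simp only [s, map_mul, map_pow, eval_C, eval_X]
  field_simp
  ring

variable {κ : Type*} [Fintype κ] (T : κ → Finset ι) (ν : κ → ℕ)

theorem isHomogeneous_prod_pointsIdeal_pow :
    (∏ k, pointsIdeal v (T k) ^ ν k).IsHomogeneous (homogeneousSubmodule (Fin (n + 1)) K) :=
  prod_induction _ _ (fun _ _ => Ideal.IsHomogeneous.mul)
    (by rw [Ideal.one_eq_top]; exact Ideal.IsHomogeneous.top _)
    fun k _ => (isHomogeneous_pointsIdeal (T k)).pow (ν k)

variable [DecidableEq ι]

theorem prod_pointsIdeal_pow_le_pointIdeal_pow (q : ι) :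
    ∏ k, pointsIdeal v (T k) ^ ν k ≤ pointIdeal (v q) ^ ∑ k with q ∈ T k, ν k := by
  rw [sum_filter, ← prod_pow_eq_pow_sum]
  refine prod_le_prod' fun k _ => ?_
  split_ifs with hq
  · exact Ideal.pow_right_mono (iInf₂_le q hq) _
  · rw [pow_zero, Ideal.one_eq_top]; exact le_top

theorem pow_mul_pow_mem_prod_pointsIdeal_pow {q : ι} {ℓ M : MvPolynomial (Fin (n + 1)) K}
    (hℓ : ℓ ∈ pointIdeal (v q)) (hM : ∀ q' ≠ q, M ∈ pointIdeal (v q')) :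
    ℓ ^ (∑ k with q ∈ T k, ν k) * M ^ (∑ k, ν k) ∈ ∏ k, pointsIdeal v (T k) ^ ν k := by
  have hfactor : ℓ ^ (∑ k with q ∈ T k, ν k) * M ^ (∑ k, ν k)
      = ∏ k, ((if q ∈ T k then ℓ else 1) * M) ^ ν k := by
    simp only [mul_pow, prod_mul_distrib, ite_pow, one_pow, ← prod_filter, prod_pow_eq_pow_sum]
  rw [hfactor]
  refine Ideal.prod_mem_prod fun k _ => Ideal.pow_mem_pow ?_ _
  split_ifs with hq
  · exact mul_mem_pointsIdeal _ hℓ hM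
  · rw [one_mul]; exact mem_pointsIdeal_of_notMem hq hM

theorem mul_sq_mem_partialsIdeal_pointsIdeal_mul [CharZero K] {k₀ : κ} (hk₀ : ν k₀ ≠ 0)
    {q : ι} (hq : q ∈ T k₀) (hv : v q ≠ 0) {M : MvPolynomial (Fin (n + 1)) K} {d : ℕ}
    (hM : M.IsHomogeneous d) (hMmem : ∀ q' ≠ q, M ∈ pointIdeal (v q')) :
    ∀ x ∈ ∏ k, pointsIdeal v (T k) ^ ν k, x * (M ^ (∑ k, ν k + 1)) ^ 2 ∈
      partialsIdeal (pointsIdeal v (T k₀) * ∏ k, pointsIdeal v (T k) ^ ν k) := by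
  intro x hx
  have hm : ∑ k with q ∈ T k, ν k ≠ 0 :=
    (Nat.pos_of_ne_zero hk₀).trans_le (single_le_sum (fun _ _ => Nat.zero_le _)
      (mem_filter.mpr ⟨mem_univ k₀, hq⟩)) |>.ne'
  refine mul_sq_mem_partialsIdeal_of_pow_mul_mem (hM.pow _) hv hm (fun ℓ hℓ => ?_) x
    (prod_pointsIdeal_pow_le_pointIdeal_pow T ν q hx)
  have hℓq := mem_pointIdeal_of_eval_eq_zero (mem_vanishingLinearForms.mp hℓ).1
    (mem_vanishingLinearForms.mp hℓ).2
  rw [show ℓ ^ (∑ k with q ∈ T k, ν k + 1) * M ^ (∑ k, ν k + 1)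
    = (ℓ * M) * (ℓ ^ (∑ k with q ∈ T k, ν k) * M ^ (∑ k, ν k)) by ring]
  exact Ideal.mul_mem_mul (mul_mem_pointsIdeal _ hℓq hMmem)
    (pow_mul_pow_mem_prod_pointsIdeal_pow T ν hℓq hMmem)

end PointsIdeal

theorem exists_forall_ge_mem_partialsIdeal_pointsIdeal_mul {K : Type*} [Field K] [CharZero K]
    {n : ℕ} {ι κ : Type*} [Fintype ι] [DecidableEq ι] [Fintype κ] {v : ι → Fin (n + 1) → K}
    (hv0 : ∀ q, v q ≠ 0) (hdist : ∀ q q', q ≠ q' → ∀ c : K, v q ≠ c • v q')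
    (T : κ → Finset ι) (ν : κ → ℕ) {k₀ : κ} (hk₀ : ν k₀ ≠ 0) :
    ∃ i₀, ∀ i ≥ i₀, ∀ F ∈ ∏ k, pointsIdeal v (T k) ^ ν k, F.IsHomogeneous i →
      F ∈ partialsIdeal (pointsIdeal v (T k₀) * ∏ k, pointsIdeal v (T k) ^ ν k) := by
  set E := ∑ k, ν k
  choose M hMhom hMq hMq' using exists_form_eval_ne_zero_vanishing_at_others hv0 hdist
  have hMmem (q : ι) : ∀ q' ≠ q, M q ∈ pointIdeal (v q') :=
    fun q' hq' => mem_pointIdeal_of_eval_eq_zero (hMhom q) (hMq' q q' hq')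
  set N := (Fintype.card ι - 1) * (E + 1) * 2
  refine exists_forall_isHomogeneous_mem_of_mul_mem (isHomogeneous_prod_pointsIdeal_pow T ν)
    (IsNoetherian.noetherian _) (N := N + 1) fun g hg d hgd f e hf he => ?_
  obtain ⟨s, hs, hsZ⟩ := exists_sub_sum_mul_mem_pointsIdeal (Z := T k₀) (fun q _ => hv0 q)
    (G := fun q => (M q ^ (E + 1)) ^ 2) (fun q _ => ((hMhom q).pow _).pow 2)
    (fun q _ => by simpa using hMq q) (fun q _ q' _ hq' => by simp [hMq' q q' hq']) hf
    (by omega)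
  rw [← sub_add_cancel f (∑ q ∈ T k₀, (M q ^ (E + 1)) ^ 2 * s q), mul_add, mul_sum, mul_comm g]
  refine add_mem (mem_partialsIdeal_of_isHomogeneous (Ideal.mul_mem_mul hsZ hg) (hs.mul hgd)
    (by omega)) (sum_mem fun q hq => ?_)
  rw [← mul_assoc]
  exact Ideal.mul_mem_right _ _
    (mul_sq_mem_partialsIdeal_pointsIdeal_mul T ν hk₀ hq (hv0 q) (hMhom q) (hMmem q) g hg)

theorem chain_product_subset_partials_in_large_degrees_general {K : Type*} [Field K] [CharZero K]
    (n s t : ℕ) (ht : 2 ≤ t)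
    (v : Fin s → (Fin (n + 1) → K))
    (hv0 : ∀ j, v j ≠ 0)
    (hdist : ∀ i j, i ≠ j → ∀ c : K, v i ≠ c • v j)
    (T : Fin t → Finset (Fin s))
    (ν : Fin t → ℕ) (hν : ∀ k, 1 ≤ ν k) :
    ∃ i₀ : ℕ, ∀ i ≥ i₀, ∀ F : MvPolynomial (Fin (n + 1)) K, F.IsHomogeneous i →
      F ∈ (∏ k : Fin t, (⨅ j ∈ T k, pointIdeal (v j)) ^ (ν k)) →
      F ∈ partialsIdeal
        (∏ k : Fin t,
          (⨅ j ∈ T k, pointIdeal (v j)) ^ (ν k + if k.val = 0 then 1 else 0)) := by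
  have : NeZero t := ⟨by omega⟩
  have hprod : ∏ k : Fin t, (⨅ j ∈ T k, pointIdeal (v j)) ^ (ν k + if k.val = 0 then 1 else 0)
      = pointsIdeal v (T 0) * ∏ k, pointsIdeal v (T k) ^ ν k := by
    simp only [Fin.val_eq_zero_iff, pow_add, prod_mul_distrib, pow_ite, pow_one, pow_zero,
      prod_ite_eq', mem_univ, if_true]
    exact mul_comm _ _
  obtain ⟨i₀, h⟩ := exists_forall_ge_mem_partialsIdeal_pointsIdeal_mul hv0 hdist T ν
    (k₀ := 0) (Nat.one_le_iff_ne_zero.mp (hν 0))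
  exact ⟨i₀, fun i hi F hF hFJ => hprod ▸ h i hi F hFJ hF⟩

/-- Let `Y_1 ⊋ Y_2 ⊋ ⋯ ⊋ Y_t` (`t ≥ 2`) be a strictly descending chain of
finite sets of distinct points in `ℙ^n` over a field of characteristic zero, and let
`ν_1, …, ν_t ≥ 1`. Then for all sufficiently large `i`,
`(I_{Y_1}^{ν_1} ⋯ I_{Y_t}^{ν_t})_i ⊆ (∂(I_{Y_1}^{ν_1+1} I_{Y_2}^{ν_2} ⋯ I_{Y_t}^{ν_t}))_i`. -/
theorem chain_product_subset_partials_in_large_degrees {K : Type*} [Field K] [CharZero K]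
    (n s t : ℕ) (ht : 2 ≤ t)
    (v : Fin s → (Fin (n + 1) → K))
    (hv0 : ∀ j, v j ≠ 0)
    (hdist : ∀ i j, i ≠ j → ∀ c : K, v i ≠ c • v j)
    (T : Fin t → Finset (Fin s))
    (hTne : ∀ k, (T k).Nonempty)
    (hchain : ∀ k l : Fin t, k < l → T l ⊂ T k)
    (ν : Fin t → ℕ) (hν : ∀ k, 1 ≤ ν k) :
    ∃ i₀ : ℕ, ∀ i ≥ i₀, ∀ F : MvPolynomial (Fin (n + 1)) K, F.IsHomogeneous i →
      F ∈ (∏ k : Fin t, (⨅ j ∈ T k, pointIdeal (v j)) ^ (ν k)) →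
      F ∈ partialsIdeal
        (∏ k : Fin t,
          (⨅ j ∈ T k, pointIdeal (v j)) ^ (ν k + if k.val = 0 then 1 else 0)) :=
  chain_product_subset_partials_in_large_degrees_general n s t ht v hv0 hdist T ν hν
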